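/- arXiv:2105.06302 — 2 statements merged into one kernel-verified Lean document; each statement's English description precedes it below -/
import Mathlib

section
/- The pointwise order on arm sequences, A ≤ B iff A_t ≤ B_t for all t, is a total order: for any two arm sequences A, B, either A_t ≤ B_t for all t or B_t ≤ A_t for all t. -/
def IsArmSeq (e : ℕ) (A : ℕ → ℤ) : Prop :=
  (∀ t : ℕ, 1 ≤ t → (t : ℤ) - 1 ≤ A t ∧ A t ≤ ((e : ℤ) - 1) * t) ∧
  (∀ t u : ℕ, 1 ≤ t → 1 ≤ u → A (t + u) = A t + A u ∨ A (t + u) = A t + A u + 1)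

lemma arm_mul_bounds (A : ℕ → ℤ)
    (hA : ∀ t u : ℕ, 1 ≤ t → 1 ≤ u → A (t + u) = A t + A u ∨ A (t + u) = A t + A u + 1) :
    ∀ n : ℕ, 1 ≤ n → ∀ t : ℕ, 1 ≤ t →
      (n : ℤ) * A t ≤ A (n * t) ∧ A (n * t) ≤ (n : ℤ) * A t + ((n : ℤ) - 1) := by
  intro n hn
  induction n, hn using Nat.le_induction with
  | base => intro t ht; simp
  | succ n hn ih =>
    intro t ht
    obtain ⟨h1, h2⟩ := ih t ht
    have hnt : 1 ≤ n * t := Nat.one_le_iff_ne_zero.mpr (by positivity)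
    have hkey := hA (n * t) t hnt ht
    have heq : (n + 1) * t = n * t + t := by ring
    rw [heq]
    push_cast
    rcases hkey with h | h <;> rw [h] <;> constructor <;> nlinarith

/-- The pointwise order on arm sequences is total. -/
theorem arm_seq_order_total (e : ℕ) (he : 2 ≤ e) (A B : ℕ → ℤ)
    (hA : IsArmSeq e A) (hB : IsArmSeq e B) :
    (∀ t : ℕ, 1 ≤ t → A t ≤ B t) ∨ (∀ t : ℕ, 1 ≤ t → B t ≤ A t) := by
  by_contra h
  push_neg at h
  obtain ⟨⟨t, ht, hBt⟩, ⟨u, hu, hAu⟩⟩ := h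
  obtain ⟨hA1, _⟩ := arm_mul_bounds A hA.2 u hu t ht
  obtain ⟨_, hA2⟩ := arm_mul_bounds A hA.2 t ht u hu
  obtain ⟨hB1, _⟩ := arm_mul_bounds B hB.2 t ht u hu
  obtain ⟨_, hB2⟩ := arm_mul_bounds B hB.2 u hu t ht
  have hc : u * t = t * u := Nat.mul_comm u t
  rw [hc] at hA1 hB2
  have hu1 : (1 : ℤ) ≤ u := by exact_mod_cast hu
  have ht1 : (1 : ℤ) ≤ t := by exact_mod_cast ht
  nlinarith
end

section
/- A partition λ is e-regular if and only if λ has no hook of length et with arm length t − 1 for any t ≥ 1 (i.e. λ is A-regular for A = (0, 1, 2, …)). -/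
def IsPartition (p : ℕ → ℕ) : Prop :=
  p 0 = 0 ∧ (∀ r, 1 ≤ r → p (r + 1) ≤ p r) ∧ (∃ N, ∀ r, N ≤ r → p r = 0)

noncomputable def conj (p : ℕ → ℕ) : ℕ → ℕ :=
  fun r => Set.ncard {c : ℕ | 1 ≤ c ∧ r ≤ p c}

noncomputable def HasHook (p : ℕ → ℕ) (len arm : ℕ) : Prop :=
  ∃ r c : ℕ, 1 ≤ r ∧ 1 ≤ c ∧ c ≤ p r ∧
    (p r - c) + (conj p c - r) + 1 = len ∧ p r - c = arm

section aux

variable {p : ℕ → ℕ} (hp : IsPartition p)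

lemma part_anti (hp : IsPartition p) : ∀ a b : ℕ, 1 ≤ a → a ≤ b → p b ≤ p a := by
  intro a b ha hab
  induction b with
  | zero => omega
  | succ n ih =>
    rcases Nat.lt_or_ge a (n+1) with h | h
    · exact le_trans (hp.2.1 n (by omega)) (ih (by omega))
    · have : a = n + 1 := by omega
      simp [this]

lemma setc_finite (hp : IsPartition p) {c : ℕ} (hc : 1 ≤ c) :
    {r : ℕ | 1 ≤ r ∧ c ≤ p r}.Finite := by
  obtain ⟨N, hN⟩ := hp.2.2
  apply Set.Finite.subset (Set.finite_Iio N)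
  intro r hr
  simp only [Set.mem_setOf_eq] at hr
  by_contra h
  have := hN r (by simpa [Set.mem_Iio, not_lt] using h)
  omega

lemma ncard_Icc_one (r : ℕ) : (Set.Icc 1 r).ncard = r := by
  rw [← Finset.coe_Icc, Set.ncard_coe_finset, Nat.card_Icc]
  omega

lemma le_conj (hp : IsPartition p) {r c : ℕ} (hr : 1 ≤ r) (hc : 1 ≤ c) (h : c ≤ p r) :
    r ≤ conj p c := by
  have hsub : Set.Icc 1 r ⊆ {x : ℕ | 1 ≤ x ∧ c ≤ p x} := by
    intro j hj
    simp only [Set.mem_Icc] at hj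
    exact ⟨hj.1, le_trans h (part_anti hp j r hj.1 hj.2)⟩
  calc r = (Set.Icc 1 r).ncard := (ncard_Icc_one r).symm
    _ ≤ _ := Set.ncard_le_ncard hsub (setc_finite hp hc)

lemma conj_le (hp : IsPartition p) {r c : ℕ} (hr : 1 ≤ r) (hc : 1 ≤ c) (h : r ≤ conj p c) :
    c ≤ p r := by
  by_contra hcon
  push_neg at hcon
  have hsub : {x : ℕ | 1 ≤ x ∧ c ≤ p x} ⊆ Set.Icc 1 (r - 1) := by
    intro j hj
    simp only [Set.mem_setOf_eq] at hj
    simp only [Set.mem_Icc]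
    refine ⟨hj.1, ?_⟩
    by_contra hjr
    have : p j ≤ p r := part_anti hp r j hr (by omega)
    omega
  have := Set.ncard_le_ncard hsub (Set.finite_Icc 1 (r-1))
  rw [ncard_Icc_one] at this
  have : conj p c ≤ r - 1 := this
  omega

end aux

/-- `λ` is `e`-regular (no `e` equal positive parts) iff it has no hook of
length `et` with arm length `t - 1` for any `t ≥ 1`. -/
theorem regular_iff_no_shallow_hooks (e : ℕ) (he : 2 ≤ e)
    (p : ℕ → ℕ) (hp : IsPartition p) :
    (¬ ∃ r, 1 ≤ r ∧ 0 < p (r + e - 1) ∧ p (r + e - 1) = p r) ↔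
      ∀ t : ℕ, 1 ≤ t → ¬ HasHook p (e * t) (t - 1) := by
  constructor
  · -- regular → no shallow hooks
    intro hreg t ht ⟨r, c, hr, hc, hcp, hlen, harm⟩
    have hLr : r ≤ conj p c := le_conj hp hr hc hcp
    have het : t * (e - 1) + t = e * t := by
      rw [Nat.mul_comm e t, ← Nat.mul_succ, Nat.succ_eq_add_one,
        Nat.sub_add_cancel (by omega)]
    have hconj : conj p c = r + t * (e - 1) := by omega
    -- by induction, p (r + k*(e-1)) + k ≤ p r for k ≤ t
    have key : ∀ k, k ≤ t → p (r + k * (e - 1)) + k ≤ p r := by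
      intro k hk
      induction k with
      | zero => simp
      | succ n ih =>
        have ihn := ih (by omega)
        set i := r + n * (e - 1) with hi
        have hi1 : 1 ≤ i := by omega
        have hsucc : (n + 1) * (e - 1) = n * (e - 1) + (e - 1) := Nat.succ_mul n (e - 1)
        have hile : i + (e - 1) ≤ conj p c := by
          rw [hconj]
          have : (n + 1) * (e - 1) ≤ t * (e - 1) := Nat.mul_le_mul_right _ (by omega)
          omega
        have hpie : c ≤ p (i + (e - 1)) :=
          conj_le hp (by omega) hc (by omega)
        have hne : ¬ (0 < p (i + e - 1) ∧ p (i + e - 1) = p i) := by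
          intro hcon; exact hreg ⟨i, hi1, hcon⟩
        have heq : i + e - 1 = i + (e - 1) := by omega
        rw [heq] at hne
        have hle : p (i + (e - 1)) ≤ p i := part_anti hp i (i + (e-1)) hi1 (by omega)
        have hlt : p (i + (e - 1)) + 1 ≤ p i := by omega
        have hrw : r + (n + 1) * (e - 1) = i + (e - 1) := by omega
        rw [hrw]
        omega
    have := key t le_rfl
    have hlast : c ≤ p (r + t * (e - 1)) :=
      conj_le hp (by omega) hc (by omega)
    omega
  · -- no shallow hooks → regular
    intro hh ⟨r, hr, hpos, heq⟩
    set m := p r with hm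
    have hm1 : 1 ≤ m := by omega
    set L := conj p m with hL
    have hLre : r + e - 1 ≤ L := by
      have : m ≤ p (r + e - 1) := by omega
      exact le_conj hp (by omega) hm1 this
    set r' := L - (e - 1) with hr'
    have hr'1 : 1 ≤ r' := by omega
    have hr'L : r' ≤ L := by omega
    have hpr'm : p r' = m := by
      have h1 : m ≤ p r' := conj_le hp hr'1 hm1 hr'L
      have h2 : p r' ≤ p r := part_anti hp r r' hr (by omega)
      omega
    apply hh 1 le_rfl
    refine ⟨r', m, hr'1, hm1, by omega, ?_, by omega⟩
    have : conj p m - r' = e - 1 := by omega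
    rw [← hL, this]
    omega
end
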